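/- arXiv:2207.14089 — 2 statements merged into one kernel-verified Lean document; each statement's English description precedes it below -/
import Mathlib

section
/- Let m₁, m₂, n be positive integers and ℓ an integer, and let C = [[1 + m₁m₂, m₁],[m₂, 1]] over ℝ. Then |det((-1)^ℓ · C^n − I)| = |λ₊^n + λ₋^n + (−1)^(ℓ+1)·2|, where λ± = (2 + m₁m₂ ± √(m₁²m₂² + 4m₁m₂))/2. -/
/-!
Since `det C = 1` and `tr C = 2 + m₁m₂`, the numbers `λ±` are the eigenvalues of `C`, so
Cayley–Hamilton gives `tr (C ^ n) = λ₊ ^ n + λ₋ ^ n`. For a `2 × 2` matrix `A` and a sign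
`ε = (-1) ^ ℓ`, `det (ε • A - 1) = det A - ε tr A + 1`, which for `A = C ^ n` is
`-ε (λ₊ ^ n + λ₋ ^ n - 2ε)`.
-/

namespace Matrix

variable {R : Type*} [CommRing R]

theorem det_smul_sub_one_fin_two (c : R) (A : Matrix (Fin 2) (Fin 2) R) :
    (c • A - 1).det = c ^ 2 * A.det - c * A.trace + 1 := by
  simp only [det_fin_two, trace_fin_two, sub_apply, smul_apply, smul_eq_mul, one_apply_eq, ne_eq,
    zero_ne_one, one_ne_zero, not_false_eq_true, one_apply_ne]
  ring

theorem sq_fin_two_eq_trace_smul_sub_det_smul (A : Matrix (Fin 2) (Fin 2) R) :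
    A ^ 2 = A.trace • A - A.det • 1 := by
  ext i j
  fin_cases i <;> fin_cases j <;>
    simp only [Fin.zero_eta, Fin.mk_one, Fin.isValue, sq, mul_apply, Fin.sum_univ_two, trace_fin_two,
      det_fin_two, sub_apply, smul_apply, smul_eq_mul, one_apply_eq, ne_eq, zero_ne_one, one_ne_zero,
      not_false_eq_true, one_apply_ne] <;> ring

theorem pow_add_two_fin_two (A : Matrix (Fin 2) (Fin 2) R) (k : ℕ) :
    A ^ (k + 2) = A.trace • A ^ (k + 1) - A.det • A ^ k := by
  rw [pow_add, sq_fin_two_eq_trace_smul_sub_det_smul, mul_sub, mul_smul_comm, mul_smul_comm,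
    mul_one, ← pow_succ]

theorem trace_pow_fin_two_eq_add_pow {A : Matrix (Fin 2) (Fin 2) R} {a b : R}
    (hadd : a + b = A.trace) (hmul : a * b = A.det) (n : ℕ) :
    (A ^ n).trace = a ^ n + b ^ n := by
  induction n using Nat.twoStepInduction with
  | zero => rw [pow_zero, pow_zero, pow_zero, trace_one, Fintype.card_fin]; norm_num
  | one => simpa using hadd.symm
  | more k ih₀ ih₁ =>
    rw [pow_add_two_fin_two, trace_sub, trace_smul, trace_smul, ih₀, ih₁, smul_eq_mul,
      smul_eq_mul, ← hadd, ← hmul]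
    ring

end Matrix

open Matrix in
theorem stmt_8_general (m₁ m₂ n : ℕ) (l : ℤ) :
    let C : Matrix (Fin 2) (Fin 2) ℝ := !![1 + (m₁ : ℝ) * m₂, (m₁ : ℝ); (m₂ : ℝ), 1]
    |((-1 : ℝ) ^ l • C ^ n - 1).det| =
      |((2 + m₁ * m₂ + Real.sqrt ((m₁ : ℝ) ^ 2 * m₂ ^ 2 + 4 * m₁ * m₂)) / 2) ^ n +
       ((2 + m₁ * m₂ - Real.sqrt ((m₁ : ℝ) ^ 2 * m₂ ^ 2 + 4 * m₁ * m₂)) / 2) ^ n +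
       (-1 : ℝ) ^ (l + 1) * 2| := by
  intro C
  set s := Real.sqrt ((m₁ : ℝ) ^ 2 * m₂ ^ 2 + 4 * m₁ * m₂)
  have hs : s ^ 2 = (m₁ : ℝ) ^ 2 * m₂ ^ 2 + 4 * m₁ * m₂ := Real.sq_sqrt (by positivity)
  have hdet : C.det = 1 := by simp [C, det_fin_two_of]
  have htrace := trace_pow_fin_two_eq_add_pow (A := C)
    (a := (2 + m₁ * m₂ + s) / 2) (b := (2 + m₁ * m₂ - s) / 2)
    (by rw [trace_fin_two_of]; ring) (by rw [hdet]; linear_combination (-1 / 4 : ℝ) * hs) n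
  rw [det_smul_sub_one_fin_two, det_pow, hdet, one_pow, htrace]
  rcases Int.even_or_odd l with hl | hl
  · rw [hl.neg_one_zpow, hl.add_one.neg_one_zpow, ← abs_neg]
    ring_nf
  · rw [hl.neg_one_zpow, hl.add_one.neg_one_zpow]
    ring_nf

theorem stmt_8 (m₁ m₂ n : ℕ) (hm₁ : 0 < m₁) (hm₂ : 0 < m₂) (hn : 0 < n) (l : ℤ) :
    let C : Matrix (Fin 2) (Fin 2) ℝ := !![1 + (m₁ : ℝ) * m₂, (m₁ : ℝ); (m₂ : ℝ), 1]
    |((-1 : ℝ) ^ l • C ^ n - 1).det| =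
      |((2 + m₁ * m₂ + Real.sqrt ((m₁ : ℝ) ^ 2 * m₂ ^ 2 + 4 * m₁ * m₂)) / 2) ^ n +
       ((2 + m₁ * m₂ - Real.sqrt ((m₁ : ℝ) ^ 2 * m₂ ^ 2 + 4 * m₁ * m₂)) / 2) ^ n +
       (-1 : ℝ) ^ (l + 1) * 2| :=
  stmt_8_general m₁ m₂ n l
end

section
/- Let C = [[6,1],[5,1]] over ℤ and Lₖ the Lucas numbers. Then for all n ≥ 1, trace(C^n) = L_{4n}, and hence |det(C^n + I)| = L_{4n} + 2 and |det(C^n − I)| = L_{4n} − 2. -/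
def lucas : ℕ → ℤ
  | 0 => 2
  | 1 => 1
  | k + 2 => lucas (k + 1) + lucas k

/-!
Since `det C = 1` and `trace C = 7 = L₄`, Cayley–Hamilton gives
`trace (C ^ (n + 2)) = 7 * trace (C ^ (n + 1)) - trace (C ^ n)`, the same recurrence as
`k ↦ L (4 * k)` (from `L (k + 8) = 7 * L (k + 4) - L k`), so the two sequences agree. For a
`2 × 2` matrix `M` of determinant `1`, `det (M ± 1) = 2 ± trace M`, and `L (4 * n) ≥ 2`
fixes the signs.
-/

lemma lucas_add_two (k : ℕ) : lucas (k + 2) = lucas (k + 1) + lucas k := rfl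

lemma one_le_lucas (k : ℕ) : 1 ≤ lucas k := by
  induction k using Nat.twoStepInduction with
  | zero => decide
  | one => decide
  | more k ih₀ ih₁ => rw [lucas_add_two]; linarith

lemma two_le_lucas {k : ℕ} (hk : k ≠ 1) : 2 ≤ lucas k := by
  match k, hk with
  | 0, _ => decide
  | k + 2, _ => rw [lucas_add_two]; linarith [one_le_lucas k, one_le_lucas (k + 1)]

lemma lucas_add_eight (k : ℕ) : lucas (k + 8) = 7 * lucas (k + 4) - lucas k := by
  simp only [lucas_add_two]
  ring

namespace Matrix

variable {R : Type*} [CommRing R] (M : Matrix (Fin 2) (Fin 2) R)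

lemma sq_fin_two_eq_trace_smul_sub_det : M ^ 2 = M.trace • M - M.det • 1 := by
  ext i j
  fin_cases i <;> fin_cases j <;>
    simp [sq, mul_apply, Fin.sum_univ_two, trace_fin_two, det_fin_two] <;> ring

lemma trace_pow_add_two_fin_two (n : ℕ) :
    (M ^ (n + 2)).trace = M.trace * (M ^ (n + 1)).trace - M.det * (M ^ n).trace := by
  rw [pow_add, sq_fin_two_eq_trace_smul_sub_det, mul_sub, Matrix.mul_smul, Matrix.mul_smul, mul_one,
    ← pow_succ, trace_sub, trace_smul, trace_smul, smul_eq_mul, smul_eq_mul]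

lemma det_add_one_fin_two : (M + 1).det = M.det + M.trace + 1 := by
  simp only [det_fin_two, trace_fin_two, add_apply, one_apply_eq, one_apply_ne zero_ne_one,
    one_apply_ne one_ne_zero]
  ring

lemma det_sub_one_fin_two : (M - 1).det = M.det - M.trace + 1 := by
  simp only [det_fin_two, trace_fin_two, sub_apply, one_apply_eq, one_apply_ne zero_ne_one,
    one_apply_ne one_ne_zero]
  ring

end Matrix

lemma trace_pow_eq_lucas_four_mul (n : ℕ) :
    ((!![6, 1; 5, 1] : Matrix (Fin 2) (Fin 2) ℤ) ^ n).trace = lucas (4 * n) := by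
  set C : Matrix (Fin 2) (Fin 2) ℤ := !![6, 1; 5, 1]
  have htr : C.trace = 7 := by simp [C, Matrix.trace_fin_two_of]
  have hdet : C.det = 1 := by simp [C, Matrix.det_fin_two_of]
  induction n using Nat.twoStepInduction with
  | zero => simp [Matrix.trace_one]; rfl
  | one => rw [pow_one, htr]; rfl
  | more n ih₀ ih₁ =>
    rw [Matrix.trace_pow_add_two_fin_two, htr, hdet, ih₀, ih₁,
      show 4 * (n + 2) = 4 * n + 8 by ring, lucas_add_eight]
    ring_nf

theorem stmt_18_general (n : ℕ) :
    let C : Matrix (Fin 2) (Fin 2) ℤ := !![6, 1; 5, 1]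
    (C ^ n).trace = lucas (4 * n) ∧
      |(C ^ n + 1).det| = lucas (4 * n) + 2 ∧
      |(C ^ n - 1).det| = lucas (4 * n) - 2 := by
  intro C
  have htr : (C ^ n).trace = lucas (4 * n) := trace_pow_eq_lucas_four_mul n
  have hdet : (C ^ n).det = 1 := by simp [C, Matrix.det_pow, Matrix.det_fin_two_of]
  have hL : 2 ≤ lucas (4 * n) := two_le_lucas (by omega)
  refine ⟨htr, ?_, ?_⟩
  · rw [Matrix.det_add_one_fin_two, hdet, htr, abs_of_nonneg (by linarith)]
    ring
  · rw [Matrix.det_sub_one_fin_two, hdet, htr, abs_of_nonpos (by linarith)]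
    ring

theorem stmt_18 (n : ℕ) (hn : 1 ≤ n) :
    let C : Matrix (Fin 2) (Fin 2) ℤ := !![6, 1; 5, 1]
    (C ^ n).trace = lucas (4 * n) ∧
      |(C ^ n + 1).det| = lucas (4 * n) + 2 ∧
      |(C ^ n - 1).det| = lucas (4 * n) - 2 :=
  stmt_18_general n
end
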